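/- Let α ∈ (0, 1/800], let R > 0 satisfy √α·R ≤ 1/10, let r ∈ [−2, 2], and set R' = (1−α)·R + √α·r. Then Φ(R') − Φ(R) ≤ √α·r·Φ'(R) + α·(2/3 − R²/10)·exp(R²/8), where Φ'(R) = (R/4)·exp(R²/8). -/

import Mathlib

/-!
Since `Φ x ≤ exp (x²/8)` for all `x`, with equality for `x = R > 0`, it suffices to bound
`exp (R²/8) * (exp D - 1)` where `D = R'²/8 - R²/8`. With `s = √α` one has
`D = s·rR/4 + O(s²)` and `|D| ≤ 1/10`, so the cubic Taylor bound gives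
`exp D ≤ 1 + D + (47/90)·D²`. The first-order term `s·rR/4` is the `Φ'(R)` term; among the `s²`
terms, the `-R²/4` coming from the discount `1 - α` beats the `(47/90)·(rR/4)²` coming from `D²`,
which leaves at most `2/3 - R²/10`.
-/

/-- The NormalHedge potential function: `Φ(x) = exp(x²/8)` for `x > 0`, `1` for `x ≤ 0`. -/
noncomputable def Phi (x : ℝ) : ℝ := if 0 < x then Real.exp (x ^ 2 / 8) else 1

open Real

theorem Real.exp_le_one_add_add_mul_sq {x c : ℝ} (hx : |x| ≤ c) (hc : c ≤ 1) :
    exp x ≤ 1 + x + (1 / 2 + 2 * c / 9) * x ^ 2 := by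
  have htaylor := (abs_le.1 (exp_bound (hx.trans hc) (n := 3) (by norm_num))).2
  have hcube : |x| ^ 3 ≤ c * x ^ 2 := by
    rw [pow_succ', sq_abs]
    exact mul_le_mul_of_nonneg_right hx (sq_nonneg _)
  norm_num [Finset.sum_range_succ, Nat.factorial] at htaylor
  nlinarith

theorem Phi_le_exp (x : ℝ) : Phi x ≤ exp (x ^ 2 / 8) := by
  unfold Phi
  split_ifs
  · rfl
  · exact one_le_exp (by positivity)

theorem Phi_of_pos {x : ℝ} (hx : 0 < x) : Phi x = exp (x ^ 2 / 8) := if_pos hx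

/-- `s` stands for `√α`, so `(1 - s²) * R + s * r` is the updated regret `R'`. -/
noncomputable def exponentIncrement (s R r : ℝ) : ℝ :=
  ((1 - s ^ 2) * R + s * r) ^ 2 / 8 - R ^ 2 / 8

section

variable {s R r : ℝ}

theorem exponentIncrement_eq (s R r : ℝ) : exponentIncrement s R r =
    s * r * R / 4 + s ^ 2 * r ^ 2 / 8 - (s * R) ^ 2 / 4 - s ^ 2 * (s * r * R) / 4
      + s ^ 2 * (s * R) ^ 2 / 8 := by
  unfold exponentIncrement; ring

theorem abs_mul_mul_le_one_fifth (hs : 0 ≤ s) (hR : 0 ≤ R) (hsR : s * R ≤ 1 / 10)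
    (hr : |r| ≤ 2) : |s * r * R| ≤ 1 / 5 := by
  rw [mul_right_comm, abs_mul, abs_of_nonneg (mul_nonneg hs hR)]
  nlinarith [abs_nonneg r, mul_nonneg hs hR]

theorem abs_exponentIncrement_le (hs : 0 ≤ s) (hs2 : s ^ 2 ≤ 1 / 800) (hR : 0 ≤ R)
    (hsR : s * R ≤ 1 / 10) (hr : |r| ≤ 2) : |exponentIncrement s R r| ≤ 1 / 10 := by
  have hx := abs_le.1 (abs_mul_mul_le_one_fifth hs hR hsR hr)
  have hr2 : r ^ 2 ≤ 4 := by nlinarith [sq_abs r, abs_nonneg r]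
  have hu2 : (s * R) ^ 2 ≤ 1 / 100 := by nlinarith [mul_nonneg hs hR]
  rw [exponentIncrement_eq, abs_le]
  constructor <;>
    nlinarith [mul_nonneg (sq_nonneg s) (sq_nonneg r), mul_nonneg (sq_nonneg s) (sq_nonneg (s * R)),
      mul_le_mul_of_nonneg_left hx.1 (sq_nonneg s), mul_le_mul_of_nonneg_left hx.2 (sq_nonneg s)]

theorem exponentIncrement_add_mul_sq_le (hs : 0 ≤ s) (hs2 : s ^ 2 ≤ 1 / 800) (hR : 0 ≤ R)
    (hsR : s * R ≤ 1 / 10) (hr : |r| ≤ 2) :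
    exponentIncrement s R r + 47 / 90 * exponentIncrement s R r ^ 2 ≤
      s * r * R / 4 + s ^ 2 * (2 / 3 - R ^ 2 / 10) := by
  set W := r ^ 2 / 8 - R ^ 2 / 4 - s * r * R / 4 + s ^ 2 * R ^ 2 / 8 with hW
  have hD : exponentIncrement s R r = s * r * R / 4 + s ^ 2 * W := by
    unfold exponentIncrement W; ring
  have hx := abs_le.1 (abs_mul_mul_le_one_fifth hs hR hsR hr)
  have hr2 : r ^ 2 ≤ 4 := by nlinarith [sq_abs r, abs_nonneg r]
  have hu2 : (s * R) ^ 2 ≤ 1 / 100 := by nlinarith [mul_nonneg hs hR]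
  have hW' : W = r ^ 2 / 8 - R ^ 2 / 4 - s * r * R / 4 + (s * R) ^ 2 / 8 := by rw [hW]; ring
  have hW_le : W ≤ 441 / 800 - R ^ 2 / 4 := by linarith
  have hW_abs : |W| ≤ R ^ 2 / 4 + 441 / 800 := by
    rw [abs_le]; constructor <;> nlinarith [sq_nonneg (s * R), sq_nonneg r]
  have hcross : s * r * R * W ≤ (R ^ 2 / 4 + 441 / 800) / 5 := calc
    s * r * R * W ≤ |s * r * R| * |W| := (le_abs_self _).trans (abs_mul _ _).le
    _ ≤ 1 / 5 * (R ^ 2 / 4 + 441 / 800) :=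
      mul_le_mul (abs_le.2 hx) hW_abs (abs_nonneg _) (by norm_num)
    _ = _ := by ring
  have hsq : s ^ 2 * W ^ 2 ≤ R ^ 2 / 1600 + 1 / 300 := by
    have hW2 : W ^ 2 ≤ (R ^ 2 / 4 + 441 / 800) ^ 2 := by
      rw [← sq_abs]; exact pow_le_pow_left₀ (abs_nonneg _) hW_abs 2
    nlinarith [mul_le_mul_of_nonneg_left hW2 (sq_nonneg s),
      mul_le_mul_of_nonneg_right hu2 (sq_nonneg R), mul_le_mul_of_nonneg_right hs2 (sq_nonneg R)]
  have hquad : W + 47 / 90 * (r ^ 2 * R ^ 2 / 16 + s * r * R * W / 2 + s ^ 2 * W ^ 2) ≤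
      2 / 3 - R ^ 2 / 10 := by
    nlinarith [mul_le_mul_of_nonneg_right hr2 (sq_nonneg R)]
  rw [hD]
  linear_combination s ^ 2 * hquad

theorem exp_exponentIncrement_le (hs : 0 ≤ s) (hs2 : s ^ 2 ≤ 1 / 800) (hR : 0 ≤ R)
    (hsR : s * R ≤ 1 / 10) (hr : |r| ≤ 2) :
    exp (exponentIncrement s R r) ≤ 1 + s * r * R / 4 + s ^ 2 * (2 / 3 - R ^ 2 / 10) := by
  have htaylor := exp_le_one_add_add_mul_sq (abs_exponentIncrement_le hs hs2 hR hsR hr)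
    (by norm_num)
  linarith [exponentIncrement_add_mul_sq_le hs hs2 hR hsR hr]

end

theorem normalHedge_positive_regret_potential_step
    (α : ℝ) (hα0 : 0 < α) (hα1 : α ≤ 1 / 800)
    (R : ℝ) (hR : 0 < R) (hRα : Real.sqrt α * R ≤ 1 / 10)
    (r : ℝ) (hr : r ∈ Set.Icc (-2 : ℝ) 2)
    (R' : ℝ) (hR' : R' = (1 - α) * R + Real.sqrt α * r) :
    Phi R' - Phi R ≤
      Real.sqrt α * r * ((R / 4) * Real.exp (R ^ 2 / 8)) +
        α * (2 / 3 - R ^ 2 / 10) * Real.exp (R ^ 2 / 8) := by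
  set s := √α
  have hα : α = s ^ 2 := (sq_sqrt hα0.le).symm
  have hstep : R' ^ 2 / 8 = R ^ 2 / 8 + exponentIncrement s R r := by
    rw [hR', hα]; unfold exponentIncrement; ring
  have hexp := exp_exponentIncrement_le (sqrt_nonneg α) (hα ▸ hα1) hR.le hRα (abs_le.2 hr)
  calc Phi R' - Phi R ≤ exp (R' ^ 2 / 8) - exp (R ^ 2 / 8) := by
        rw [Phi_of_pos hR]; linarith [Phi_le_exp R']
    _ = exp (R ^ 2 / 8) * (exp (exponentIncrement s R r) - 1) := by
        rw [hstep, exp_add]; ring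
    _ ≤ exp (R ^ 2 / 8) * (s * r * R / 4 + s ^ 2 * (2 / 3 - R ^ 2 / 10)) := by
        gcongr; linarith
    _ = _ := by rw [hα]; ring
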